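/- Let τ > 1 and set λ* = (1 − √(2/(2τ² + 1)))^{3/2}. For every λ ∈ (0, λ*) there exists a measurable c : ℝ → ℝ with ∫ c² dγ_τ < ∞ such that, with h(t) = ∫ c(b)·max(0, t−b) dγ_τ(b), one has ∫ ( max(0, t) − h(t) )² dγ(t) + λ·∫ c(b)² dγ_τ(b) ≤ (2 + τ²)·λ^{2/3}. -/

import Mathlib

open MeasureTheory ProbabilityTheory

/-- The centered Gaussian measure `N(0, σ²)` on `ℝ`. -/
noncomputable def gaussMeasure (σ : ℝ) : Measure ℝ :=
  gaussianReal 0 (Real.toNNReal (σ ^ 2))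

section ReluAuxSection

open Real
open scoped ENNReal NNReal

namespace ReluAux

lemma vne {σ : ℝ} (hσ : 0 < σ) : (Real.toNNReal (σ ^ 2)) ≠ 0 :=
  (Real.toNNReal_pos.mpr (by positivity)).ne'

lemma pdf_eq {σ : ℝ} (hσ : 0 < σ) (x : ℝ) :
    gaussianPDFReal 0 (Real.toNNReal (σ ^ 2)) x
      = (σ * Real.sqrt (2 * π))⁻¹ * Real.exp (-(2 * σ ^ 2)⁻¹ * x ^ 2) := by
  simp only [gaussianPDFReal]
  rw [Real.coe_toNNReal _ (sq_nonneg σ)]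
  rw [show 2 * π * σ ^ 2 = σ ^ 2 * (2 * π) by ring, Real.sqrt_mul (sq_nonneg σ),
    Real.sqrt_sq hσ.le, sub_zero,
    show -x ^ 2 / (2 * σ ^ 2) = -(2 * σ ^ 2)⁻¹ * x ^ 2 by ring]

lemma integral_gaussMeasure {σ : ℝ} (hσ : 0 < σ) (g : ℝ → ℝ) :
    ∫ x, g x ∂(gaussMeasure σ)
      = ∫ x, gaussianPDFReal 0 (Real.toNNReal (σ ^ 2)) x * g x := by
  rw [gaussMeasure, gaussianReal_of_var_ne_zero _ (vne hσ)]
  have hdens : gaussianPDF 0 (Real.toNNReal (σ ^ 2))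
      = fun x => ((fun y => Real.toNNReal (gaussianPDFReal 0 (Real.toNNReal (σ ^ 2)) y)) x
          : ℝ≥0∞) := rfl
  rw [hdens, integral_withDensity_eq_integral_smul
    ((measurable_gaussianPDFReal 0 _).real_toNNReal) g]
  refine integral_congr_ae (ae_of_all _ fun x => ?_)
  simp [NNReal.smul_def, Real.coe_toNNReal _ (gaussianPDFReal_nonneg 0 _ x)]

lemma integrable_gaussMeasure_iff {σ : ℝ} (hσ : 0 < σ) {g : ℝ → ℝ} :
    Integrable g (gaussMeasure σ)
      ↔ Integrable (fun x => gaussianPDFReal 0 (Real.toNNReal (σ ^ 2)) x * g x) := by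
  rw [gaussMeasure, gaussianReal_of_var_ne_zero _ (vne hσ)]
  have hdens : gaussianPDF 0 (Real.toNNReal (σ ^ 2))
      = fun x => ((fun y => Real.toNNReal (gaussianPDFReal 0 (Real.toNNReal (σ ^ 2)) y)) x
          : ℝ≥0∞) := rfl
  rw [hdens, integrable_withDensity_iff_integrable_coe_smul
    ((measurable_gaussianPDFReal 0 _).real_toNNReal)]
  constructor <;> intro h <;> refine h.congr (ae_of_all _ fun x => ?_) <;>
    simp [NNReal.smul_def, Real.coe_toNNReal _ (gaussianPDFReal_nonneg 0 _ x)]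

lemma integral_Ioi_id_mul_exp {k : ℝ} (hk : 0 < k) :
    ∫ x in Set.Ioi (0:ℝ), x * Real.exp (-k * x ^ 2) = (2 * k)⁻¹ := by
  have hderiv : ∀ x ∈ Set.Ici (0:ℝ),
      HasDerivAt (fun x => -(2 * k)⁻¹ * Real.exp (-k * x ^ 2)) (x * Real.exp (-k * x ^ 2)) x := by
    intro x _
    have h1 : HasDerivAt (fun x : ℝ => -k * x ^ 2) (-k * (2 * x)) x := by
      simpa using (hasDerivAt_pow 2 x).const_mul (-k)
    have h2 := (h1.exp).const_mul (-(2 * k)⁻¹)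
    refine h2.congr_deriv ?_
    linear_combination (x * Real.exp (-k * x ^ 2)) * mul_inv_cancel₀ hk.ne'
  have htend : Filter.Tendsto (fun x => -(2 * k)⁻¹ * Real.exp (-k * x ^ 2))
      Filter.atTop (nhds 0) := by
    have h1 : Filter.Tendsto (fun x : ℝ => -k * x ^ 2) Filter.atTop Filter.atBot := by
      have := (Filter.tendsto_pow_atTop (n := 2) (by norm_num)).const_mul_atTop hk
      have h3 := Filter.tendsto_neg_atTop_atBot.comp this
      simpa [Function.comp_def, neg_mul] using h3
    have h2 := Real.tendsto_exp_atBot.comp h1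
    simpa using h2.const_mul (-(2 * k)⁻¹)
  have := integral_Ioi_of_hasDerivAt_of_tendsto' hderiv
    (integrable_mul_exp_neg_mul_sq hk).integrableOn htend
  rw [this]
  simp

lemma integral_abs_mul_exp {k : ℝ} (hk : 0 < k) :
    ∫ x : ℝ, |x| * Real.exp (-k * x ^ 2) = k⁻¹ := by
  have h := integral_comp_abs (f := fun x : ℝ => x * Real.exp (-k * x ^ 2))
  simp only [sq_abs] at h
  rw [h, integral_Ioi_id_mul_exp hk]
  rw [mul_inv]
  ring

end ReluAux

instance gaussMeasure_isProbabilityMeasure (σ : ℝ) : IsProbabilityMeasure (gaussMeasure σ) := by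
  rw [gaussMeasure]; infer_instance

end ReluAuxSection

open Real in
set_option maxHeartbeats 1000000 in
/-- Proposition G.1: the ReLU as a target admits regularized approximation
error at most `(2 + τ²)·λ^{2/3}` by superpositions of Gaussian-shifted ReLU features, for
every `λ ∈ (0, λ*)` with `λ* = (1 − √(2/(2τ² + 1)))^{3/2}`. -/
theorem relu_rkhs_approximation (τ : ℝ) (hτ : 1 < τ) (lam : ℝ)
    (hlam : lam ∈ Set.Ioo (0 : ℝ) ((1 - Real.sqrt (2 / (2 * τ ^ 2 + 1))) ^ ((3 : ℝ) / 2))) :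
    ∃ c : ℝ → ℝ, Measurable c ∧
      Integrable (fun b => c b ^ 2) (gaussMeasure τ) ∧
      (∫ t, (max 0 t - ∫ b, c b * max 0 (t - b) ∂(gaussMeasure τ)) ^ 2 ∂(gaussMeasure 1)) +
          lam * ∫ b, c b ^ 2 ∂(gaussMeasure τ) ≤
        (2 + τ ^ 2) * lam ^ ((2 : ℝ) / 3) := by
  obtain ⟨hlam0, hlamU⟩ := hlam
  have hτ0 : 0 < τ := lt_trans one_pos hτ
  have hπ : (0:ℝ) < π := Real.pi_pos
  -- `lam < 1`
  have hsq1 : Real.sqrt (2 / (2 * τ ^ 2 + 1)) ≤ 1 := by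
    have h := Real.sqrt_le_sqrt (show 2 / (2 * τ ^ 2 + 1) ≤ 1 by
      rw [div_le_one (by positivity)]; nlinarith)
    simpa using h
  have hlam1 : lam < 1 :=
    lt_of_lt_of_le hlamU (Real.rpow_le_one (by linarith)
      (by linarith [Real.sqrt_nonneg (2 / (2 * τ ^ 2 + 1))]) (by norm_num))
  obtain ⟨s, hs_def⟩ : ∃ x : ℝ, x = lam ^ ((1:ℝ)/3) := ⟨_, rfl⟩
  have hs0 : 0 < s := hs_def ▸ Real.rpow_pos_of_pos hlam0 _
  have hs1 : s < 1 := hs_def ▸ Real.rpow_lt_one hlam0.le hlam1 (by norm_num)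
  have hsτ : s < τ := hs1.trans hτ
  have hs2 : s ^ 2 = lam ^ ((2:ℝ)/3) := by
    rw [hs_def, ← Real.rpow_natCast (lam ^ ((1:ℝ)/3)) 2, ← Real.rpow_mul hlam0.le]
    norm_num
  have hls : lam / s = lam ^ ((2:ℝ)/3) := by
    rw [hs_def, show (2:ℝ)/3 = 1 - 1/3 by norm_num, Real.rpow_sub hlam0, Real.rpow_one]
  obtain ⟨k1, hk1_def⟩ : ∃ x : ℝ, x = ((s ^ 2)⁻¹ - (τ ^ 2)⁻¹) / 2 := ⟨_, rfl⟩
  have hk1 : 0 < k1 := by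
    rw [hk1_def]
    have key : (τ ^ 2)⁻¹ < (s ^ 2)⁻¹ := by
      rw [inv_lt_inv₀ (by positivity) (by positivity)]
      nlinarith
    linarith
  obtain ⟨c, hc_def⟩ : ∃ c : ℝ → ℝ, c = fun b => τ / s * Real.exp (-k1 * b ^ 2) := ⟨_, rfl⟩
  have hc_cont : Continuous c := by rw [hc_def]; fun_prop
  have hc_meas : Measurable c := hc_cont.measurable
  have hc_nonneg : ∀ b, 0 ≤ c b := fun b => by simp only [hc_def]; positivity
  have hc_le : ∀ b, c b ≤ τ / s := by
    intro b
    simp only [hc_def]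
    have h1 : Real.exp (-k1 * b ^ 2) ≤ 1 :=
      Real.exp_le_one_iff.mpr (by nlinarith [sq_nonneg b])
    nlinarith [div_pos hτ0 hs0]
  have hc2_int : Integrable (fun b => c b ^ 2) (gaussMeasure τ) :=
    Integrable.mono' (integrable_const ((τ / s) ^ 2))
      ((hc_cont.pow 2).aestronglyMeasurable)
      (ae_of_all _ fun b => by
        rw [Real.norm_eq_abs, abs_of_nonneg (by positivity)]
        exact pow_le_pow_left₀ (hc_nonneg b) (hc_le b) 2)
  have h2π : Real.sqrt (2 * π) ≠ 0 := ne_of_gt (Real.sqrt_pos.mpr (by positivity))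
  -- identity (I): `pdf_τ · c = pdf_s`
  have hI : ∀ b, gaussianPDFReal 0 (Real.toNNReal (τ ^ 2)) b * c b
      = gaussianPDFReal 0 (Real.toNNReal (s ^ 2)) b := by
    intro b
    rw [ReluAux.pdf_eq hτ0, ReluAux.pdf_eq hs0]
    simp only [hc_def]
    rw [show (τ * Real.sqrt (2 * π))⁻¹ * Real.exp (-(2 * τ ^ 2)⁻¹ * b ^ 2) *
        (τ / s * Real.exp (-k1 * b ^ 2))
        = ((τ * Real.sqrt (2 * π))⁻¹ * (τ / s)) *
          (Real.exp (-(2 * τ ^ 2)⁻¹ * b ^ 2) * Real.exp (-k1 * b ^ 2)) from by ring,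
      ← Real.exp_add]
    congr 1
    · field_simp
    · rw [hk1_def]; congr 1; ring
  obtain ⟨k2, hk2_def⟩ : ∃ x : ℝ, x = (s ^ 2)⁻¹ - (2 * τ ^ 2)⁻¹ := ⟨_, rfl⟩
  have hk2 : (2 * s ^ 2)⁻¹ ≤ k2 := by
    rw [hk2_def]
    have h1 : (2 * τ ^ 2)⁻¹ ≤ (2 * s ^ 2)⁻¹ := by
      rw [inv_le_inv₀ (by positivity) (by positivity)]
      nlinarith
    have h2 : (2 * s ^ 2)⁻¹ + (2 * s ^ 2)⁻¹ = (s ^ 2)⁻¹ := by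
      field_simp
      ring
    linarith
  have hk2pos : 0 < k2 := lt_of_lt_of_le (by positivity) hk2
  -- identity (II): `pdf_τ · c² = const · exp(-k₂ b²)`
  have hII : ∀ b, gaussianPDFReal 0 (Real.toNNReal (τ ^ 2)) b * c b ^ 2
      = τ / (s ^ 2 * Real.sqrt (2 * π)) * Real.exp (-k2 * b ^ 2) := by
    intro b
    rw [ReluAux.pdf_eq hτ0]
    simp only [hc_def]
    rw [show (τ * Real.sqrt (2 * π))⁻¹ * Real.exp (-(2 * τ ^ 2)⁻¹ * b ^ 2) *
        (τ / s * Real.exp (-k1 * b ^ 2)) ^ 2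
        = ((τ * Real.sqrt (2 * π))⁻¹ * (τ / s) ^ 2) *
          (Real.exp (-(2 * τ ^ 2)⁻¹ * b ^ 2) *
            (Real.exp (-k1 * b ^ 2) * Real.exp (-k1 * b ^ 2))) from by ring,
      ← Real.exp_add, ← Real.exp_add]
    congr 1
    · field_simp
    · rw [hk1_def, hk2_def]; congr 1; ring
  -- value of `∫ c² dγ_τ`
  have hC2 : ∫ b, c b ^ 2 ∂(gaussMeasure τ) ≤ τ / s := by
    rw [ReluAux.integral_gaussMeasure hτ0]
    calc ∫ b, gaussianPDFReal 0 (Real.toNNReal (τ ^ 2)) b * c b ^ 2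
        = ∫ b, τ / (s ^ 2 * Real.sqrt (2 * π)) * Real.exp (-k2 * b ^ 2) := by
          refine integral_congr_ae (ae_of_all _ fun b => ?_)
          exact hII b
      _ = τ / (s ^ 2 * Real.sqrt (2 * π)) * Real.sqrt (π / k2) := by
          rw [integral_const_mul, integral_gaussian]
      _ ≤ τ / (s ^ 2 * Real.sqrt (2 * π)) * Real.sqrt (2 * π * s ^ 2) := by
          refine mul_le_mul_of_nonneg_left (Real.sqrt_le_sqrt ?_) (by positivity)
          rw [div_le_iff₀ hk2pos]
          have hval : 2 * π * s ^ 2 * (2 * s ^ 2)⁻¹ = π := by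
            field_simp
          linarith [mul_le_mul_of_nonneg_left hk2
            (show (0:ℝ) ≤ 2 * π * s ^ 2 by positivity), hval]
      _ = τ / s := by
          rw [show 2 * π * s ^ 2 = (2 * π) * s ^ 2 by ring,
            Real.sqrt_mul (by positivity) (s ^ 2), Real.sqrt_sq hs0.le]
          field_simp
  -- integrability facts under `gaussMeasure s`
  have hid_int : Integrable (fun b : ℝ => b) (gaussMeasure s) := by
    rw [ReluAux.integrable_gaussMeasure_iff hs0]
    have heq : (fun x : ℝ => gaussianPDFReal 0 (Real.toNNReal (s ^ 2)) x * x)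
        = fun x => (s * Real.sqrt (2 * π))⁻¹ * (x * Real.exp (-(2 * s ^ 2)⁻¹ * x ^ 2)) := by
      funext x; rw [ReluAux.pdf_eq hs0]; ring
    rw [heq]
    exact (integrable_mul_exp_neg_mul_sq (by positivity)).const_mul _
  have habs_int : Integrable (fun b : ℝ => |b|) (gaussMeasure s) := hid_int.abs
  have habs_val : ∫ b, |b| ∂(gaussMeasure s) ≤ s := by
    rw [ReluAux.integral_gaussMeasure hs0]
    have heq : (fun x : ℝ => gaussianPDFReal 0 (Real.toNNReal (s ^ 2)) x * |x|)
        = fun x => (s * Real.sqrt (2 * π))⁻¹ * (|x| * Real.exp (-(2 * s ^ 2)⁻¹ * x ^ 2)) := by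
      funext x; rw [ReluAux.pdf_eq hs0]; ring
    rw [heq, integral_const_mul, ReluAux.integral_abs_mul_exp (by positivity), inv_inv]
    have hsqrt2 : 2 ≤ Real.sqrt (2 * π) := by
      have h4 : (4:ℝ) ≤ 2 * π := by nlinarith [Real.pi_gt_three]
      have h := Real.sqrt_le_sqrt h4
      rwa [show Real.sqrt 4 = 2 by
        rw [show (4:ℝ) = 2 ^ 2 by norm_num, Real.sqrt_sq (by norm_num)]] at h
    rw [inv_mul_le_iff₀ (by positivity)]
    nlinarith [sq_nonneg s, mul_le_mul_of_nonneg_right hsqrt2 (sq_nonneg s)]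
  have hmax_int : ∀ t : ℝ, Integrable (fun b => max 0 (t - b)) (gaussMeasure s) := by
    intro t
    refine Integrable.mono' ((integrable_const |t|).add habs_int)
      ((continuous_const.max (continuous_const.sub continuous_id)).aestronglyMeasurable)
      (ae_of_all _ fun b => ?_)
    rw [Real.norm_eq_abs, abs_of_nonneg (le_max_left _ _)]
    refine max_le (add_nonneg (abs_nonneg t) (abs_nonneg b)) ?_
    calc t - b ≤ |t - b| := le_abs_self _
      _ ≤ |t| + |b| := abs_sub _ _
  -- pointwise bound
  have hpoint : ∀ t : ℝ, |max 0 t - ∫ b, c b * max 0 (t - b) ∂(gaussMeasure τ)| ≤ s := by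
    intro t
    have h1 : ∫ b, c b * max 0 (t - b) ∂(gaussMeasure τ)
        = ∫ b, max 0 (t - b) ∂(gaussMeasure s) := by
      rw [ReluAux.integral_gaussMeasure hτ0, ReluAux.integral_gaussMeasure hs0]
      refine integral_congr_ae (ae_of_all _ fun b => ?_)
      show gaussianPDFReal 0 (Real.toNNReal (τ ^ 2)) b * (c b * max 0 (t - b))
        = gaussianPDFReal 0 (Real.toNNReal (s ^ 2)) b * max 0 (t - b)
      rw [← mul_assoc, hI b]
    have h2 : ∫ b, (max 0 t - max 0 (t - b)) ∂(gaussMeasure s)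
        = max 0 t - ∫ b, max 0 (t - b) ∂(gaussMeasure s) := by
      rw [integral_sub (integrable_const _) (hmax_int t), integral_const]
      simp
    rw [h1, ← h2]
    calc |∫ b, (max 0 t - max 0 (t - b)) ∂(gaussMeasure s)|
        ≤ ∫ b, |max 0 t - max 0 (t - b)| ∂(gaussMeasure s) := by
          simpa [Real.norm_eq_abs] using
            norm_integral_le_integral_norm (μ := gaussMeasure s)
              (fun b => max 0 t - max 0 (t - b))
      _ ≤ ∫ b, |b| ∂(gaussMeasure s) := by
          refine integral_mono ((integrable_const _).sub (hmax_int t)).abs habs_int fun b => ?_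
          have h3 := abs_max_sub_max_le_abs t (t - b) 0
          rw [max_comm t 0, max_comm (t - b) 0] at h3
          simpa using h3
      _ ≤ s := habs_val
  refine ⟨c, hc_meas, hc2_int, ?_⟩
  have houter : ∫ t, (max 0 t - ∫ b, c b * max 0 (t - b) ∂(gaussMeasure τ)) ^ 2 ∂(gaussMeasure 1)
      ≤ s ^ 2 := by
    have hb : ∀ t : ℝ,
        (max 0 t - ∫ b, c b * max 0 (t - b) ∂(gaussMeasure τ)) ^ 2 ≤ s ^ 2 := by
      intro t
      have h := abs_le.mp (hpoint t)
      exact sq_le_sq' (by linarith [h.1]) h.2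
    calc ∫ t, (max 0 t - ∫ b, c b * max 0 (t - b) ∂(gaussMeasure τ)) ^ 2 ∂(gaussMeasure 1)
        ≤ ∫ _t, s ^ 2 ∂(gaussMeasure 1) :=
          integral_mono_of_nonneg (ae_of_all _ fun t => sq_nonneg _) (integrable_const _)
            (ae_of_all _ hb)
      _ = s ^ 2 := by simp
  calc (∫ t, (max 0 t - ∫ b, c b * max 0 (t - b) ∂(gaussMeasure τ)) ^ 2 ∂(gaussMeasure 1)) +
          lam * ∫ b, c b ^ 2 ∂(gaussMeasure τ)
      ≤ s ^ 2 + lam * (τ / s) :=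
        add_le_add houter (mul_le_mul_of_nonneg_left hC2 hlam0.le)
    _ = lam ^ ((2:ℝ)/3) + τ * lam ^ ((2:ℝ)/3) := by
        rw [hs2, show lam * (τ / s) = τ * (lam / s) by ring, hls]
    _ ≤ (2 + τ ^ 2) * lam ^ ((2:ℝ)/3) := by
        have hrp : 0 ≤ lam ^ ((2:ℝ)/3) := Real.rpow_nonneg hlam0.le _
        nlinarith [mul_nonneg hrp (sq_nonneg (τ - 1)), mul_nonneg hrp hτ0.le]
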